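/- arXiv:1603.01156 — 2 statements merged into one kernel-verified Lean document; each statement's English description precedes it below -/
import Mathlib

section
/- Let n ≥ 2, let γ : ℝ^{n−1} → ℝ be smooth and ℤ^{n−1}-periodic, fix s′ ∈ ℝ^{n−1} and t > 0, and let γ^t(s′) be the unique zero of q ↦ ∂_{s_n} u_γ(s′,q,t). Then ∂_{s_n} u_γ(s′, q, t) < 0 for every q > γ^t(s′), and ∂_{s_n} u_γ(s′, q, t) > 0 for every q < γ^t(s′). -/
open MeasureTheory Filter Set Topology

section aux

variable {m : ℕ} {γ : (Fin m → ℝ) → ℝ} {s' : Fin m → ℝ} {t : ℝ}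

/-- `ℤ^m`-periodicity of a function on `ℝ^m`. -/
def ZPeriodic (m : ℕ) (f : (Fin m → ℝ) → ℝ) : Prop :=
  ∀ (x : Fin m → ℝ) (k : Fin m → ℤ), f (x + fun i => (k i : ℝ)) = f x

/-- The heat-evolved function
`u_γ(s',q,t) = (4πt)^{-m/2} ∫_{ℝ^m} exp(−(|x'−s'|² + (γ(x')−q)²)/(4t)) dx'`. -/
noncomputable def uGamma (m : ℕ) (γ : (Fin m → ℝ) → ℝ)
    (s' : Fin m → ℝ) (q t : ℝ) : ℝ :=
  (4 * Real.pi * t) ^ (-(m : ℝ) / 2) *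
    ∫ x' : Fin m → ℝ,
      Real.exp (-((∑ i, (x' i - s' i) ^ 2) + (γ x' - q) ^ 2) / (4 * t))

lemma gauss_integrable (s' : Fin m → ℝ) (ht : 0 < t) :
    Integrable (fun x' : Fin m → ℝ => Real.exp (-(∑ i, (x' i - s' i) ^ 2) / (4 * t))) := by
  have h4t : (0:ℝ) < 4 * t := by linarith
  have h1 : ∀ c : ℝ, Integrable (fun x : ℝ => Real.exp (-(x - c) ^ 2 / (4 * t))) := by
    intro c
    have hb := integrable_exp_neg_mul_sq (b := 1 / (4 * t)) (by positivity)
    have h2 := ((measurePreserving_sub_right volume c).integrable_comp_emb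
      (MeasurableEquiv.subRight c).measurableEmbedding).2 hb
    have : ((fun x : ℝ => Real.exp (-(1 / (4 * t)) * x ^ 2)) ∘ fun x => x - c)
        = fun x : ℝ => Real.exp (-(x - c) ^ 2 / (4 * t)) := by
      funext x
      simp only [Function.comp_apply]
      congr 1
      field_simp
    rwa [this] at h2
  have heq : (fun x' : Fin m → ℝ => Real.exp (-(∑ i, (x' i - s' i) ^ 2) / (4 * t)))
      = fun x' => ∏ i, Real.exp (-(x' i - s' i) ^ 2 / (4 * t)) := by
    funext x'
    rw [← Real.exp_sum]
    congr 1
    rw [← Finset.sum_div, ← Finset.sum_neg_distrib]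
  rw [heq]
  exact Integrable.fintype_prod fun i => h1 (s' i)

lemma integrand_integrable (hγ : Continuous γ) (q : ℝ) (ht : 0 < t) :
    Integrable (fun x' : Fin m → ℝ =>
      Real.exp (-((∑ i, (x' i - s' i) ^ 2) + (γ x' - q) ^ 2) / (4 * t))) := by
  have h4t : (0:ℝ) < 4 * t := by linarith
  apply (gauss_integrable s' ht).mono'
  · apply Continuous.aestronglyMeasurable
    fun_prop
  · filter_upwards with x'
    rw [Real.norm_eq_abs, abs_of_pos (Real.exp_pos _)]
    apply Real.exp_le_exp.2
    apply (div_le_div_iff_of_pos_right h4t).2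
    nlinarith [sq_nonneg (γ x' - q)]

lemma uGamma_pos (hγ : Continuous γ) (q : ℝ) (ht : 0 < t) : 0 < uGamma m γ s' q t := by
  have hπ := Real.pi_pos
  haveI : NeZero (volume : Measure (Fin m → ℝ)) :=
    ⟨Measure.measure_univ_ne_zero.mp (isOpen_univ.measure_pos _ ⟨0, trivial⟩).ne'⟩
  exact mul_pos (Real.rpow_pos_of_pos (by positivity) _)
    (integral_exp_pos (integrand_integrable hγ q ht))

lemma uGamma_tendsto (hγ : Continuous γ) (ht : 0 < t) (l : Filter ℝ) [l.IsCountablyGenerated]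
    (hl : ∀ x' : Fin m → ℝ, Tendsto (fun q => (γ x' - q) ^ 2) l atTop) :
    Tendsto (fun q => uGamma m γ s' q t) l (𝓝 0) := by
  have h4t : (0:ℝ) < 4 * t := by linarith
  have key : Tendsto (fun q => ∫ x' : Fin m → ℝ,
      Real.exp (-((∑ i, (x' i - s' i) ^ 2) + (γ x' - q) ^ 2) / (4 * t))) l (𝓝 0) := by
    have h0 : (0:ℝ) = ∫ _x' : Fin m → ℝ, (0:ℝ) := by simp
    rw [h0]
    apply tendsto_integral_filter_of_dominated_convergence
      (fun x' => Real.exp (-(∑ i, (x' i - s' i) ^ 2) / (4 * t)))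
    · filter_upwards with q
      apply Continuous.aestronglyMeasurable
      fun_prop
    · filter_upwards with q
      filter_upwards with x'
      rw [Real.norm_eq_abs, abs_of_pos (Real.exp_pos _)]
      apply Real.exp_le_exp.2
      apply (div_le_div_iff_of_pos_right h4t).2
      nlinarith [sq_nonneg (γ x' - q)]
    · exact gauss_integrable s' ht
    · filter_upwards with x'
      have h2 : Tendsto (fun q => -((∑ i, (x' i - s' i) ^ 2) + (γ x' - q) ^ 2) / (4 * t))
          l atBot := by
        apply Tendsto.atBot_div_const h4t
        exact tendsto_neg_atTop_atBot.comp (tendsto_atTop_add_const_left _ _ (hl x'))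
      exact Real.tendsto_exp_atBot.comp h2
  have := key.const_mul ((4 * Real.pi * t) ^ (-(m : ℝ) / 2))
  simpa [uGamma] using this

end aux

/-- if `γ^t(s')` is the unique zero of `q ↦ ∂_{s_n} u_γ(s',q,t)`, then this
derivative is negative above the zero and positive below it. -/
theorem sign_change_at_vertical_critical_point (n : ℕ) (hn : 2 ≤ n)
    (γ : (Fin (n - 1) → ℝ) → ℝ) (hsmooth : ContDiff ℝ (⊤ : ℕ∞) γ)
    (hper : ZPeriodic (n - 1) γ)
    (s' : Fin (n - 1) → ℝ) (t : ℝ) (ht : 0 < t) (q0 : ℝ)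
    (hzero : deriv (fun q => uGamma (n - 1) γ s' q t) q0 = 0)
    (huniq : ∀ q : ℝ, deriv (fun q' => uGamma (n - 1) γ s' q' t) q = 0 → q = q0) :
    (∀ q : ℝ, q0 < q → deriv (fun q' => uGamma (n - 1) γ s' q' t) q < 0) ∧
    (∀ q : ℝ, q < q0 → 0 < deriv (fun q' => uGamma (n - 1) γ s' q' t) q) := by
  have hγc : Continuous γ := hsmooth.continuous
  set f : ℝ → ℝ := fun q => uGamma (n - 1) γ s' q t with hf
  have hderivne : ∀ q, q ≠ q0 → deriv f q ≠ 0 := fun q hq h => hq (huniq q h)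
  have hdiff : ∀ q, q ≠ q0 → DifferentiableAt ℝ f q :=
    fun q hq => differentiableAt_of_deriv_ne_zero (hderivne q hq)
  -- constant sign on Ioi q0
  have hIoi : ∀ a b : ℝ, q0 < a → q0 < b → deriv f a ≤ 0 → 0 ≤ deriv f b → False := by
    intro a b ha hb hda hdb
    have hOC := (ordConnected_Ioi (a := q0)).image_deriv
      (f := f) (fun x hx => hdiff x (ne_of_gt hx))
    have h0 : (0:ℝ) ∈ deriv f '' Ioi q0 :=
      hOC.out ⟨a, ha, rfl⟩ ⟨b, hb, rfl⟩ ⟨hda, hdb⟩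
    obtain ⟨c, hc, hc0⟩ := h0
    exact absurd (huniq c hc0) (ne_of_gt hc)
  have hIio : ∀ a b : ℝ, a < q0 → b < q0 → deriv f a ≤ 0 → 0 ≤ deriv f b → False := by
    intro a b ha hb hda hdb
    have hOC := (ordConnected_Iio (a := q0)).image_deriv
      (f := f) (fun x hx => hdiff x (ne_of_lt hx))
    have h0 : (0:ℝ) ∈ deriv f '' Iio q0 :=
      hOC.out ⟨a, ha, rfl⟩ ⟨b, hb, rfl⟩ ⟨hda, hdb⟩
    obtain ⟨c, hc, hc0⟩ := h0
    exact absurd (huniq c hc0) (ne_of_lt hc)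
  constructor
  · intro q hq
    by_contra hpos
    push_neg at hpos
    have hqpos : 0 < deriv f q := lt_of_le_of_ne hpos (Ne.symm (hderivne q (ne_of_gt hq)))
    -- then deriv f > 0 on all of Ioi q0
    have hall : ∀ x, q0 < x → 0 < deriv f x := by
      intro x hx
      by_contra hx'
      push_neg at hx'
      exact hIoi x q hx hq hx' hqpos.le
    -- f strictly monotone on Ici (q0+1)
    have hmono : StrictMonoOn f (Ici (q0 + 1)) := by
      apply strictMonoOn_of_deriv_pos (convex_Ici _)
      · intro x hx
        exact (hdiff x (by simp only [mem_Ici] at hx; linarith)).continuousAt.continuousWithinAt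
      · intro x hx
        rw [interior_Ici] at hx
        exact hall x (by simp only [mem_Ioi] at hx; linarith)
    have hlim : Tendsto f atTop (𝓝 0) := by
      apply uGamma_tendsto hγc ht
      intro x'
      have h1 : Tendsto (fun q : ℝ => q - γ x') atTop atTop :=
        tendsto_atTop_add_const_right _ _ tendsto_id
      have h2 := (tendsto_pow_atTop (n := 2) two_ne_zero).comp h1
      have : (fun q : ℝ => (γ x' - q) ^ 2) = fun q : ℝ => (q - γ x') ^ 2 := by
        funext q; ring
      rw [this]
      exact h2
    have hglb : f (q0 + 2) ≤ 0 := by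
      apply ge_of_tendsto hlim
      filter_upwards [eventually_ge_atTop (q0 + 2)] with x hx
      rcases eq_or_lt_of_le hx with h | h
      · exact le_of_eq (by rw [← h])
      · exact (hmono (by simp only [mem_Ici, mem_Iic]; linarith) (by simp only [mem_Ici, mem_Iic]; linarith) h).le
    exact absurd hglb (not_le.mpr (uGamma_pos hγc _ ht))
  · intro q hq
    by_contra hneg
    push_neg at hneg
    have hqneg : deriv f q < 0 := lt_of_le_of_ne hneg (hderivne q (ne_of_lt hq))
    have hall : ∀ x, x < q0 → deriv f x < 0 := by
      intro x hx
      by_contra hx'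
      push_neg at hx'
      exact hIio q x hq hx hqneg.le hx'
    have hanti : StrictAntiOn f (Iic (q0 - 1)) := by
      apply strictAntiOn_of_deriv_neg (convex_Iic _)
      · intro x hx
        exact (hdiff x (by simp only [mem_Iic] at hx; linarith)).continuousAt.continuousWithinAt
      · intro x hx
        rw [interior_Iic] at hx
        exact hall x (by simp only [mem_Iio] at hx; linarith)
    have hlim : Tendsto f atBot (𝓝 0) := by
      apply uGamma_tendsto hγc ht
      intro x'
      have h1 : Tendsto (fun q : ℝ => γ x' - q) atBot atTop := by
        have : Tendsto (fun q : ℝ => -q) atBot atTop := tendsto_neg_atBot_atTop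
        have h2 := tendsto_atTop_add_const_left atBot (γ x') this
        simpa [sub_eq_add_neg] using h2
      exact (tendsto_pow_atTop (n := 2) two_ne_zero).comp h1
    have hglb : f (q0 - 2) ≤ 0 := by
      apply ge_of_tendsto hlim
      filter_upwards [eventually_le_atBot (q0 - 2)] with x hx
      rcases eq_or_lt_of_le hx with h | h
      · exact le_of_eq (by rw [h])
      · exact (hanti (by simp only [mem_Ici, mem_Iic]; linarith) (by simp only [mem_Ici, mem_Iic]; linarith) h).le
    exact absurd hglb (not_le.mpr (uGamma_pos hγc _ ht))
end

section
/- Let E be the space of bounded continuous functions ℝ^d → ℝ with the supremum norm, and let H : E → E be a map which is 1-Lipschitz for the supremum norm and commutes with translations, i.e. H(g(· + y)) = (H g)(· + y) for every g ∈ E and y ∈ ℝ^d. Suppose γ, f ∈ E and λ > 0 satisfy γ + λ(γ − H(γ)) = f. Then for every y ∈ ℝ^d, sup_{x ∈ ℝ^d} |γ(x + y) − γ(x)| ≤ sup_{x ∈ ℝ^d} |f(x + y) − f(x)|. In particular, if f is uniformly continuous with modulus of continuity ω, then γ has the same modulus of continuity ω. -/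
open BoundedContinuousFunction

/-!
The resolvent `f ↦ γ` of `γ + λ (γ - H γ) = f` is `1`-Lipschitz whenever `H` is: from
`(1 + λ) (γ₁ - γ₂) = (f₁ - f₂) + λ (H γ₁ - H γ₂)` one gets
`(1 + λ) ‖γ₁ - γ₂‖ ≤ ‖f₁ - f₂‖ + λ ‖γ₁ - γ₂‖`. If `H` commutes with a translation `τ`, then
`γ ∘ τ` solves the equation with right-hand side `f ∘ τ`, so `‖γ ∘ τ - γ‖ ≤ ‖f ∘ τ - f‖`.
-/

theorem LipschitzWith.norm_sub_le_of_add_smul_sub_eq {E : Type*} [SeminormedAddCommGroup E]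
    [NormedSpace ℝ E] {H : E → E} (hH : LipschitzWith 1 H) {l : ℝ} (hl : 0 ≤ l)
    {u v f g : E} (hu : u + l • (u - H u) = f) (hv : v + l • (v - H v) = g) :
    ‖u - v‖ ≤ ‖f - g‖ := by
  have hsplit : (1 + l) • (u - v) = (f - g) + l • (H u - H v) := by
    rw [← hu, ← hv]
    module
  have hHuv : ‖H u - H v‖ ≤ ‖u - v‖ := by
    simpa [dist_eq_norm] using hH.dist_le_mul u v
  have : (1 + l) * ‖u - v‖ ≤ ‖f - g‖ + l * ‖u - v‖ :=
    calc (1 + l) * ‖u - v‖ = ‖(1 + l) • (u - v)‖ := by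
          rw [norm_smul, Real.norm_of_nonneg (by linarith)]
      _ ≤ ‖f - g‖ + ‖l • (H u - H v)‖ := hsplit ▸ norm_add_le _ _
      _ = ‖f - g‖ + l * ‖H u - H v‖ := by rw [norm_smul, Real.norm_of_nonneg hl]
      _ ≤ ‖f - g‖ + l * ‖u - v‖ := by gcongr
  linarith

namespace BoundedContinuousFunction

variable {α β : Type*} [TopologicalSpace α] [SeminormedAddCommGroup β] [NormedSpace ℝ β]
  {H : (α →ᵇ β) → (α →ᵇ β)} {τ : C(α, α)} {γ f : α →ᵇ β} {l : ℝ}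

theorem compContinuous_add_smul_sub_eq
    (hτ : ∀ g, H (g.compContinuous τ) = (H g).compContinuous τ)
    (heq : γ + l • (γ - H γ) = f) :
    γ.compContinuous τ + l • (γ.compContinuous τ - H (γ.compContinuous τ)) =
      f.compContinuous τ := by
  ext x
  simp [hτ, ← heq]

theorem norm_comp_sub_le_of_add_smul_sub_eq (hH : LipschitzWith 1 H)
    (hτ : ∀ g, H (g.compContinuous τ) = (H g).compContinuous τ) (hl : 0 ≤ l)
    (heq : γ + l • (γ - H γ) = f) {K : ℝ} (hK : ∀ x, ‖f (τ x) - f x‖ ≤ K) (x : α) :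
    ‖γ (τ x) - γ x‖ ≤ K :=
  calc ‖γ (τ x) - γ x‖ = ‖(γ.compContinuous τ - γ) x‖ := rfl
    _ ≤ ‖γ.compContinuous τ - γ‖ := norm_coe_le_norm _ x
    _ ≤ ‖f.compContinuous τ - f‖ :=
        hH.norm_sub_le_of_add_smul_sub_eq hl (compContinuous_add_smul_sub_eq hτ heq) heq
    _ ≤ K :=
        have : Nonempty α := ⟨x⟩
        norm_le_of_nonempty.2 hK

end BoundedContinuousFunction

/-- let `E` be the space of bounded continuous functions `ℝ^d → ℝ` with the
sup norm, `H : E → E` a `1`-Lipschitz map commuting with translations. If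
`γ + λ(γ − Hγ) = f` with `λ > 0`, then for every `y` the sup of `|γ(·+y) − γ(·)|` is
bounded by the sup of `|f(·+y) − f(·)|`; in particular any modulus of continuity of `f`
is a modulus of continuity of `γ`. -/
theorem resolvent_inherits_modulus_of_continuity
    (d : ℕ)
    (H : BoundedContinuousFunction (Fin d → ℝ) ℝ → BoundedContinuousFunction (Fin d → ℝ) ℝ)
    (hHlip : LipschitzWith 1 H)
    (hHcomm : ∀ (g : BoundedContinuousFunction (Fin d → ℝ) ℝ) (y : Fin d → ℝ),
      H (g.compContinuous (ContinuousMap.mk (fun x => x + y) (by continuity)))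
        = (H g).compContinuous (ContinuousMap.mk (fun x => x + y) (by continuity)))
    (γ f : BoundedContinuousFunction (Fin d → ℝ) ℝ) (l : ℝ) (hl : 0 < l)
    (heq : γ + l • (γ - H γ) = f) :
    (∀ (y : Fin d → ℝ) (K : ℝ), (∀ x, |f (x + y) - f x| ≤ K) →
      ∀ x, |γ (x + y) - γ x| ≤ K) ∧
    (∀ ω : ℝ → ℝ, (∀ x₁ x₂, |f x₁ - f x₂| ≤ ω ‖x₁ - x₂‖) →
      ∀ x₁ x₂, |γ x₁ - γ x₂| ≤ ω ‖x₁ - x₂‖) := by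
  have translate : ∀ (y : Fin d → ℝ) (K : ℝ), (∀ x, |f (x + y) - f x| ≤ K) →
      ∀ x, |γ (x + y) - γ x| ≤ K := fun y K hK =>
    norm_comp_sub_le_of_add_smul_sub_eq hHlip (hHcomm · y) hl.le heq hK
  refine ⟨translate, fun ω hω x₁ x₂ => ?_⟩
  simpa using translate (x₁ - x₂) (ω ‖x₁ - x₂‖)
    (fun x => by simpa using hω (x + (x₁ - x₂)) x) x₂
end
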